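/- arXiv:0811.1875 — 3 statements merged into one kernel-verified Lean document; each statement's English description precedes it below -/
import Mathlib

section
/- Every optimal solution T to Max Internal Spanning Tree (a spanning tree with the maximum number of internal vertices) either is a Hamiltonian path or has an independent set of leaves: no two leaves of T are adjacent in G. -/
open SimpleGraph

/-- Degree of a vertex in a graph, via set cardinality. -/
noncomputable def deg {V : Type*} (T : SimpleGraph V) (v : V) : ℕ := {u | T.Adj v u}.ncard

/-- `T` is a spanning tree of `G`. -/
def IsSpanningTree {V : Type*} (G T : SimpleGraph V) : Prop := T ≤ G ∧ T.IsTree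

/-- Number of internal vertices (degree ≥ 2). -/
noncomputable def internalCount {V : Type*} (T : SimpleGraph V) : ℕ := {v | 2 ≤ deg T v}.ncard

/-- Number of leaves (degree 1). -/
noncomputable def leafCount {V : Type*} (T : SimpleGraph V) : ℕ := {v | deg T v = 1}.ncard

/-- Number of vertices of degree exactly `i`. -/
noncomputable def degCount {V : Type*} (T : SimpleGraph V) (i : ℕ) : ℕ := {v | deg T v = i}.ncard

/-- `T` is a Hamiltonian path of `G`: a spanning tree all of whose degrees are ≤ 2. -/
def IsHamPath {V : Type*} (G T : SimpleGraph V) : Prop := IsSpanningTree G T ∧ ∀ v, deg T v ≤ 2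

/-!
If `T` is not a Hamiltonian path, it has a vertex of degree at least three. Suppose two leaves
`u`, `v` of `T` are adjacent in `G`. The tree path from `u` to `v` must pass through a vertex `a`
of degree at least three, since a path between two leaves all of whose vertices have degree at
most two is a whole component. Replacing the edge `ab` of this path that points towards `v` by
`uv` gives another spanning tree of `G`, in which `u` and `v` become internal, `a` stays internal
and only `b` can stop being internal: one internal vertex more than in `T`.
-/

section Degree

variable {V : Type*} {G H : SimpleGraph V} {u v z a b : V}

theorem deg_eq_ncard_neighborSet (G : SimpleGraph V) (v : V) :
    deg G v = (G.neighborSet v).ncard := rfl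

theorem ncard_le_deg [Finite V] {S : Set V} (h : S ⊆ G.neighborSet v) : S.ncard ≤ deg G v :=
  Set.ncard_le_ncard h

theorem deg_mono [Finite V] (h : G ≤ H) (v : V) : deg G v ≤ deg H v :=
  ncard_le_deg fun _ hw => h hw

theorem deg_deleteEdges_of_ne (hza : z ≠ a) (hzb : z ≠ b) :
    deg (G.deleteEdges {s(a, b)}) z = deg G z := by
  simp only [deg_eq_ncard_neighborSet]
  congr 1
  ext w
  simp [deleteEdges_adj, hza, hzb]

theorem deg_le_deg_deleteEdges_add_one [Finite V] :
    deg G a ≤ deg (G.deleteEdges {s(a, b)}) a + 1 := by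
  have h : (G.deleteEdges {s(a, b)}).neighborSet a = G.neighborSet a \ {b} := by
    ext w
    simp only [mem_neighborSet, deleteEdges_adj, Set.mem_sdiff, Set.mem_singleton_iff]
    grind [G.ne_of_adj]
  have := Set.le_ncard_sdiff {b} (G.neighborSet a)
  rw [Set.ncard_singleton] at this
  rw [deg_eq_ncard_neighborSet, deg_eq_ncard_neighborSet, h]
  omega

theorem deg_sup_edge_left [Finite V] (huv : u ≠ v) (h : ¬G.Adj u v) :
    deg (G ⊔ edge u v) u = deg G u + 1 := by
  have hN : (G ⊔ edge u v).neighborSet u = insert v (G.neighborSet u) := by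
    ext w
    simp only [mem_neighborSet, sup_adj, edge_adj, Set.mem_insert_iff]
    grind
  rw [deg_eq_ncard_neighborSet, hN, Set.ncard_insert_of_notMem (s := G.neighborSet u) h]
  rfl

end Degree

theorem internalCount_lt_deleteEdges_sup_edge {V : Type*} [Finite V] {G : SimpleGraph V}
    {a b u v : V} (ha : 3 ≤ deg G a) (hu : deg G u = 1) (hv : deg G v = 1) (huv : u ≠ v)
    (hD : ¬(G.deleteEdges {s(a, b)}).Adj u v) :
    internalCount G < internalCount (G.deleteEdges {s(a, b)} ⊔ edge u v) := by
  set I := {z | 2 ≤ deg G z}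
  have hsub : (I ∪ {u, v}) \ {b} ⊆ {z | 2 ≤ deg (G.deleteEdges {s(a, b)} ⊔ edge u v) z} := by
    rintro z ⟨hz | hz, hzb⟩
    · refine le_trans ?_ (deg_mono le_sup_left z)
      by_cases hza : z = a
      · rw [hza]
        have := deg_le_deg_deleteEdges_add_one (G := G) (a := a) (b := b)
        omega
      · rw [deg_deleteEdges_of_ne hza hzb]
        exact hz
    · have hza : z ≠ a := by rintro rfl; rcases hz with rfl | rfl <;> omega
      rcases hz with rfl | rfl
      · rw [Set.mem_ofPred_eq, deg_sup_edge_left huv hD, deg_deleteEdges_of_ne hza hzb, hu]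
      · rw [Set.mem_ofPred_eq, edge_comm, deg_sup_edge_left huv.symm (hD ∘ Adj.symm),
          deg_deleteEdges_of_ne hza hzb, hv]
  have hdisj : Disjoint I {u, v} := by
    rw [Set.disjoint_insert_right, Set.disjoint_singleton_right]
    simp [I, hu, hv]
  have hunion : (I ∪ {u, v}).ncard = I.ncard + 2 := by
    rw [Set.ncard_union_eq hdisj, Set.ncard_pair huv]
  have hdiff := Set.le_ncard_sdiff {b} (I ∪ {u, v})
  rw [Set.ncard_singleton] at hdiff
  have := Set.ncard_le_ncard hsub
  change I.ncard < {z | 2 ≤ deg (G.deleteEdges {s(a, b)} ⊔ edge u v) z}.ncard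
  omega

namespace SimpleGraph

variable {V : Type*} {G H : SimpleGraph V} {u v a b : V}

theorem Reachable.of_forall_adj_reachable (h : ∀ ⦃x y⦄, G.Adj x y → H.Reachable x y)
    (huv : G.Reachable u v) : H.Reachable u v := by
  obtain ⟨p⟩ := huv
  induction p with
  | nil => rfl
  | cons hxy _ ih => exact (h hxy).trans ih

theorem IsAcyclic.not_reachable_deleteEdges (hG : G.IsAcyclic) (hab : G.Adj a b)
    (hua : (G.deleteEdges {s(a, b)}).Reachable u a)
    (hbv : (G.deleteEdges {s(a, b)}).Reachable b v) :
    ¬(G.deleteEdges {s(a, b)}).Reachable u v := fun huv =>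
  isBridge_iff.mp (isAcyclic_iff_forall_adj_isBridge.mp hG hab)
    (hua.symm.trans (huv.trans hbv.symm))

theorem IsTree.deleteEdges_sup_edge (hG : G.IsTree) (hab : G.Adj a b)
    (hua : (G.deleteEdges {s(a, b)}).Reachable u a)
    (hbv : (G.deleteEdges {s(a, b)}).Reachable b v) :
    (G.deleteEdges {s(a, b)} ⊔ edge u v).IsTree := by
  have hnr := hG.isAcyclic.not_reachable_deleteEdges hab hua hbv
  have huv : u ≠ v := by rintro rfl; exact hnr .rfl
  refine ⟨?_, (hG.isAcyclic.anti (deleteEdges_le _)).sup_edge_of_not_reachable hnr⟩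
  have hle : G.deleteEdges {s(a, b)} ≤ G.deleteEdges {s(a, b)} ⊔ edge u v := le_sup_left
  have hab' : (G.deleteEdges {s(a, b)} ⊔ edge u v).Reachable a b :=
    (hua.mono hle).symm.trans
      ((Adj.reachable (by simp [edge_adj, huv])).trans (hbv.mono hle).symm)
  have := hG.connected.nonempty
  refine ⟨fun x y => (hG.connected x y).of_forall_adj_reachable fun x y hxy => ?_⟩
  by_cases he : s(x, y) = s(a, b)
  · rcases Sym2.eq_iff.mp he with ⟨rfl, rfl⟩ | ⟨rfl, rfl⟩
    exacts [hab', hab'.symm]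
  · exact Adj.reachable (Or.inl (deleteEdges_adj.mpr ⟨hxy, he⟩))

theorem Walk.IsTrail.exists_adj_reachable_deleteEdges {p : G.Walk u v} (hp : p.IsTrail)
    (ha : a ∈ p.support) (hav : a ≠ v) :
    ∃ b, G.Adj a b ∧ (G.deleteEdges {s(a, b)}).Reachable u a ∧
      (G.deleteEdges {s(a, b)}).Reachable b v := by
  obtain ⟨q, r, rfl⟩ := Walk.mem_support_iff_exists_append.mp ha
  cases r with
  | nil => exact absurd rfl hav
  | cons hab r =>
    have hnd := hp.edges_nodup
    rw [edges_append, edges_cons, List.nodup_append, List.nodup_cons] at hnd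
    refine ⟨_, hab, ⟨q.toDeleteEdges _ fun e he => ?_⟩, ⟨r.toDeleteEdges _ fun e he => ?_⟩⟩
    · rintro rfl
      exact hnd.2.2 _ he _ List.mem_cons_self rfl
    · rintro rfl
      exact hnd.2.1.1 he

end SimpleGraph

namespace SimpleGraph.Walk

variable {V : Type*} {G : SimpleGraph V} {u v z : V}

theorem exists_adj_mem_support_of_ne {p : G.Walk u v} (huv : u ≠ v) (hz : z ∈ p.support) :
    ∃ y ∈ p.support, G.Adj z y := by
  obtain ⟨i, rfl, hi⟩ := mem_support_iff_exists_getVert.mp hz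
  rcases hi.lt_or_eq with hi | rfl
  · exact ⟨_, getVert_mem_support _ _, p.adj_getVert_succ hi⟩
  · have hpos : 0 < p.length := Nat.pos_of_ne_zero fun h => huv (eq_of_length_eq_zero h)
    refine ⟨_, getVert_mem_support p (p.length - 1), ?_⟩
    have := p.adj_getVert_succ (i := p.length - 1) (by omega)
    rw [Nat.sub_add_cancel hpos] at this
    exact this.symm

theorem IsPath.exists_two_adj_mem_support {p : G.Walk u v} (hp : p.IsPath) (hz : z ∈ p.support)
    (hzu : z ≠ u) (hzv : z ≠ v) :
    ∃ x ∈ p.support, ∃ y ∈ p.support, x ≠ y ∧ G.Adj z x ∧ G.Adj z y := by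
  obtain ⟨i, rfl, hi⟩ := mem_support_iff_exists_getVert.mp hz
  have hi0 : i ≠ 0 := by rintro rfl; exact hzu p.getVert_zero
  have hil : i ≠ p.length := by rintro rfl; exact hzv p.getVert_length
  refine ⟨_, getVert_mem_support p (i - 1), _, getVert_mem_support p (i + 1), fun h => ?_,
    ?_, p.adj_getVert_succ (by omega)⟩
  · have := hp.getVert_injOn (by rw [Set.mem_ofPred_eq]; omega)
      (by rw [Set.mem_ofPred_eq]; omega) h
    omega
  · have := p.adj_getVert_succ (i := i - 1) (by omega)
    rw [Nat.sub_add_cancel (Nat.pos_of_ne_zero hi0)] at this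
    exact this.symm

theorem IsPath.mem_support_of_forall_deg_le_two [Finite V] (hG : G.Connected) {p : G.Walk u v}
    (hp : p.IsPath) (huv : u ≠ v) (hu : deg G u = 1) (hv : deg G v = 1)
    (hdeg : ∀ z ∈ p.support, deg G z ≤ 2) (w : V) : w ∈ p.support := by
  by_contra hw
  -- an edge leaving the path would give its endpoint one neighbour too many
  obtain ⟨⟨⟨z, y⟩, hzy⟩, -, hz, hy⟩ :=
    (hG u w).some.exists_boundary_dart {x | x ∈ p.support} p.start_mem_support hw
  change z ∈ p.support at hz
  change y ∉ p.support at hy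
  by_cases hend : z = u ∨ z = v
  · obtain ⟨x, hx, hzx⟩ := exists_adj_mem_support_of_ne huv hz
    have h2 : 2 ≤ deg G z := by
      rw [← Set.ncard_pair (a := y) (b := x) (by rintro rfl; exact hy hx)]
      exact ncard_le_deg (by simp [Set.insert_subset_iff, hzy, hzx])
    rcases hend with rfl | rfl <;> omega
  · push Not at hend
    obtain ⟨x, hx, x', hx', hxx', hzx, hzx'⟩ := hp.exists_two_adj_mem_support hz hend.1 hend.2
    have h3 : 3 ≤ deg G z := by
      rw [← Set.ncard_eq_three.mpr ⟨y, x, x', (by rintro rfl; exact hy hx),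
        (by rintro rfl; exact hy hx'), hxx', rfl⟩]
      exact ncard_le_deg (by simp [Set.insert_subset_iff, hzy, hzx, hzx'])
    have := hdeg z hz
    omega

end SimpleGraph.Walk

theorem stmt3_general {V : Type*} [Fintype V] (G T : SimpleGraph V)
    (hT : IsSpanningTree G T)
    (hopt : ∀ T' : SimpleGraph V, IsSpanningTree G T' → internalCount T' ≤ internalCount T) :
    IsHamPath G T ∨ ∀ u v : V, deg T u = 1 → deg T v = 1 → ¬ G.Adj u v := by
  by_cases hham : ∀ v, deg T v ≤ 2
  · exact Or.inl ⟨hT, hham⟩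
  push Not at hham
  obtain ⟨w, hw⟩ := hham
  refine Or.inr fun u v hu hv huvG => ?_
  obtain ⟨p, hp⟩ := hT.2.connected.exists_isPath u v
  obtain ⟨a, hap, ha⟩ : ∃ a ∈ p.support, 3 ≤ deg T a := by
    by_contra! h
    have := h w (hp.mem_support_of_forall_deg_le_two hT.2.connected huvG.ne hu hv
      (fun z hz => Nat.le_of_lt_succ (h z hz)) w)
    omega
  obtain ⟨b, hab, hua, hbv⟩ :=
    hp.isTrail.exists_adj_reachable_deleteEdges hap (by rintro rfl; omega)
  have hT' : IsSpanningTree G (T.deleteEdges {s(a, b)} ⊔ edge u v) :=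
    ⟨sup_le ((deleteEdges_le _).trans hT.1) ((edge_le_iff G).mpr (Or.inr huvG)),
      hT.2.deleteEdges_sup_edge hab hua hbv⟩
  have hD : ¬(T.deleteEdges {s(a, b)}).Adj u v := fun h =>
    hT.2.isAcyclic.not_reachable_deleteEdges hab hua hbv h.reachable
  exact (hopt _ hT').not_gt (internalCount_lt_deleteEdges_sup_edge ha hu hv huvG.ne hD)

theorem stmt3 {V : Type*} [Fintype V] (G T : SimpleGraph V) (hG : G.Connected)
    (hT : IsSpanningTree G T)
    (hopt : ∀ T' : SimpleGraph V, IsSpanningTree G T' → internalCount T' ≤ internalCount T) :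
    IsHamPath G T ∨ ∀ u v : V, deg T u = 1 → deg T v = 1 → ¬ G.Adj u v :=
  stmt3_general G T hT hopt
end

section
/- Let G be a graph on n vertices with maximum degree Δ, and let β = (2^{Δ+1} − 1)^{1/(Δ+1)}. Then the number of subsets S ⊆ V(G) such that the induced subgraph G[S] is connected and |S| ≥ 2 is at most β^n. -/
open SimpleGraph

/-!
By Shearer's lemma, if every vertex lies in at least `k` of the sets `A i`, a family `𝒜` of vertex
sets satisfies `#𝒜 ^ k ≤ ∏ i, #(traces of 𝒜 on A i)`; its inductive proof splits `𝒜` at one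
vertex and recombines the two halves with Mahler's inequality for geometric means.
Cover the vertices by every closed neighbourhood `N[v]` once and by `{v}` with multiplicity
`Δ - deg v`, so that each vertex is covered `Δ + 1` times. A connected set with at least two
vertices that contains `v` also contains a neighbour of `v`, so its trace on `N[v]` is never `{v}`:
the family has at most `2 ^ (deg v + 1) - 1` traces on `N[v]` and at most `2` on `{v}`, and the
factors belonging to `v` multiply to at most
`2 ^ (Δ - deg v) * (2 ^ (deg v + 1) - 1) ≤ 2 ^ (Δ + 1) - 1`.
-/

open Finset

namespace NNReal

variable {ι : Type*} {s t : Finset ι}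

theorem geom_mean_add_geom_mean_le (hs : s.Nonempty) (a b : ι → ℝ≥0) :
    (∏ i ∈ s, a i) ^ (#s : ℝ)⁻¹ + (∏ i ∈ s, b i) ^ (#s : ℝ)⁻¹
      ≤ (∏ i ∈ s, (a i + b i)) ^ (#s : ℝ)⁻¹ := by
  have hm : (#s : ℝ≥0) ≠ 0 := by simpa using hs.ne_empty
  by_cases hzero : ∃ i ∈ s, a i + b i = 0
  · obtain ⟨i, hi, hab⟩ := hzero
    rw [add_eq_zero] at hab
    rw [prod_eq_zero hi hab.1, prod_eq_zero hi hab.2, zero_rpow (by simpa using hm)]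
    simp
  push Not at hzero
  set c := fun i => a i + b i
  have hw : ∑ _i ∈ s, (#s : ℝ≥0)⁻¹ = 1 := by simp [hm]
  have hexp : (((#s : ℝ≥0)⁻¹ : ℝ≥0) : ℝ) = (#s : ℝ)⁻¹ := by simp
  -- AM-GM for the ratios `f i / c i`, with equal weights
  have amgm (f : ι → ℝ≥0) :
      (∏ i ∈ s, f i) ^ (#s : ℝ)⁻¹ ≤ (∑ i ∈ s, f i / c i) / #s * (∏ i ∈ s, c i) ^ (#s : ℝ)⁻¹ := by
    calc (∏ i ∈ s, f i) ^ (#s : ℝ)⁻¹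
        = (∏ i ∈ s, (f i / c i)) ^ (#s : ℝ)⁻¹ * (∏ i ∈ s, c i) ^ (#s : ℝ)⁻¹ := by
          rw [← mul_rpow, ← prod_mul_distrib]
          exact congr_arg (· ^ _) (prod_congr rfl fun i hi => (div_mul_cancel₀ _ (hzero i hi)).symm)
      _ ≤ (∑ i ∈ s, (#s : ℝ≥0)⁻¹ * (f i / c i)) * (∏ i ∈ s, c i) ^ (#s : ℝ)⁻¹ := by
          gcongr
          rw [← finsetProd_rpow, ← hexp]
          exact geom_mean_le_arith_mean_weighted s _ _ hw
      _ = _ := by rw [← mul_sum, inv_mul_eq_div]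
  have hsum : ∑ i ∈ s, a i / c i + ∑ i ∈ s, b i / c i = #s := by
    rw [← sum_add_distrib, sum_congr rfl fun i hi => (add_div (a i) (b i) (c i)).symm.trans
      (div_self (hzero i hi))]
    simp
  calc _ ≤ (∑ i ∈ s, a i / c i) / #s * (∏ i ∈ s, c i) ^ (#s : ℝ)⁻¹
        + (∑ i ∈ s, b i / c i) / #s * (∏ i ∈ s, c i) ^ (#s : ℝ)⁻¹ := add_le_add (amgm a) (amgm b)
    _ = _ := by rw [← add_mul, ← add_div, hsum, div_self hm, one_mul]

theorem prod_rpow_inv_add_prod_rpow_inv_le {k : ℕ} (hk : k ≠ 0) (hks : k ≤ #s)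
    (a b : ι → ℝ≥0) :
    (∏ i ∈ s, a i) ^ (k : ℝ)⁻¹ + (∏ i ∈ s, b i) ^ (k : ℝ)⁻¹
      ≤ (∏ i ∈ s, (a i + b i)) ^ (k : ℝ)⁻¹ := by
  have hs : s.Nonempty := card_pos.mp (by omega)
  have hp : 1 ≤ (#s : ℝ) / k := by
    rw [one_le_div (by positivity)]
    exact_mod_cast hks
  have hroot (x : ℝ≥0) : x ^ (k : ℝ)⁻¹ = (x ^ (#s : ℝ)⁻¹) ^ ((#s : ℝ) / k) := by
    rw [← rpow_mul, inv_mul_eq_div, div_div_cancel_left' (by simpa using hs.ne_empty)]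
  rw [hroot, hroot, hroot]
  calc _ ≤ ((∏ i ∈ s, a i) ^ (#s : ℝ)⁻¹ + (∏ i ∈ s, b i) ^ (#s : ℝ)⁻¹) ^ ((#s : ℝ) / k) :=
        add_rpow_le_rpow_add _ _ hp
    _ ≤ _ := by gcongr; exact geom_mean_add_geom_mean_le hs a b

theorem add_pow_le_prod_of_pow_le_prod [DecidableEq ι] {k : ℕ} (hk : k ≠ 0) (hts : t ⊆ s)
    (hkt : k ≤ #t)
    {x y : ℝ≥0} {f g h : ι → ℝ≥0} (hx : x ^ k ≤ ∏ i ∈ s, f i) (hy : y ^ k ≤ ∏ i ∈ s, g i)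
    (hf : ∀ i ∈ s \ t, f i ≤ h i) (hg : ∀ i ∈ s \ t, g i ≤ h i)
    (hfg : ∀ i ∈ t, f i + g i ≤ h i) :
    (x + y) ^ k ≤ ∏ i ∈ s, h i := by
  have hk' : (0 : ℝ) < k := by positivity
  have hroot {z : ℝ≥0} {P : ℝ≥0} (hz : z ^ k ≤ P) : z ≤ P ^ (k : ℝ)⁻¹ := by
    rwa [le_rpow_inv_iff hk', rpow_natCast]
  set M := ∏ i ∈ s \ t, h i
  have hsplit (u : ι → ℝ≥0) : ∏ i ∈ s, u i = (∏ i ∈ s \ t, u i) * ∏ i ∈ t, u i :=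
    (prod_sdiff hts).symm
  have hx' : x ≤ M ^ (k : ℝ)⁻¹ * (∏ i ∈ t, f i) ^ (k : ℝ)⁻¹ := by
    rw [← mul_rpow]
    exact hroot (hx.trans ((hsplit f).trans_le (by gcongr (?_ * _); exact prod_le_prod' hf)))
  have hy' : y ≤ M ^ (k : ℝ)⁻¹ * (∏ i ∈ t, g i) ^ (k : ℝ)⁻¹ := by
    rw [← mul_rpow]
    exact hroot (hy.trans ((hsplit g).trans_le (by gcongr (?_ * _); exact prod_le_prod' hg)))
  have hxy : x + y ≤ (∏ i ∈ s, h i) ^ (k : ℝ)⁻¹ :=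
    calc x + y ≤ M ^ (k : ℝ)⁻¹ * ((∏ i ∈ t, f i) ^ (k : ℝ)⁻¹ + (∏ i ∈ t, g i) ^ (k : ℝ)⁻¹) := by
          rw [mul_add]; exact add_le_add hx' hy'
      _ ≤ M ^ (k : ℝ)⁻¹ * (∏ i ∈ t, (f i + g i)) ^ (k : ℝ)⁻¹ := by
          gcongr; exact prod_rpow_inv_add_prod_rpow_inv_le hk hkt f g
      _ ≤ M ^ (k : ℝ)⁻¹ * (∏ i ∈ t, h i) ^ (k : ℝ)⁻¹ := by
          gcongr with i hi; exact hfg i hi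
      _ = _ := by rw [← mul_rpow, ← hsplit]
  calc (x + y) ^ k ≤ ((∏ i ∈ s, h i) ^ (k : ℝ)⁻¹) ^ k := by gcongr
    _ = _ := rpow_inv_natCast_pow _ hk

end NNReal

namespace Finset

variable {α ι : Type*} [DecidableEq α] {𝒜 : Finset (Finset α)} {A : Finset α} {a : α}

def traceOn (𝒜 : Finset (Finset α)) (A : Finset α) : Finset (Finset α) := 𝒜.image (· ∩ A)

@[simp]
theorem traceOn_singleton_empty (A : Finset α) : traceOn {∅} A = {∅} := by
  simp [traceOn]

theorem traceOn_nonMemberSubfamily_subset :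
    traceOn (𝒜.nonMemberSubfamily a) A ⊆ traceOn 𝒜 A :=
  image_subset_image (filter_subset _ _)

theorem traceOn_memberSubfamily_subset (ha : a ∉ A) :
    traceOn (𝒜.memberSubfamily a) A ⊆ traceOn 𝒜 A := by
  simp only [traceOn, memberSubfamily, image_image]
  refine (image_subset_image (filter_subset _ 𝒜)).trans_eq' (image_congr fun S _ => ?_)
  simp [erase_inter, erase_eq_of_notMem (fun h => ha (mem_inter.mp h).2)]

theorem traceOn_nonMemberSubfamily (ha : a ∈ A) :
    traceOn (𝒜.nonMemberSubfamily a) A = (traceOn 𝒜 A).nonMemberSubfamily a := by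
  simp [traceOn, nonMemberSubfamily, filter_image, ha]

theorem traceOn_memberSubfamily (ha : a ∈ A) :
    traceOn (𝒜.memberSubfamily a) A = (traceOn 𝒜 A).memberSubfamily a := by
  simp [traceOn, memberSubfamily, filter_image, image_image, ha, Function.comp_def, erase_inter]

theorem card_traceOn_memberSubfamily_add (ha : a ∈ A) :
    #(traceOn (𝒜.memberSubfamily a) A) + #(traceOn (𝒜.nonMemberSubfamily a) A)
      = #(traceOn 𝒜 A) := by
  rw [traceOn_memberSubfamily ha, traceOn_nonMemberSubfamily ha,
    card_memberSubfamily_add_card_nonMemberSubfamily]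

/-- Shearer's lemma, in the combinatorial form of Chung, Graham, Frankl and Shearer. -/
theorem card_pow_le_prod_card_traceOn {k : ℕ} (hk : k ≠ 0) (s : Finset ι) (A : ι → Finset α)
    (hA : ∀ x, k ≤ #{i ∈ s | x ∈ A i}) (𝒜 : Finset (Finset α)) :
    #𝒜 ^ k ≤ ∏ i ∈ s, #(traceOn 𝒜 (A i)) := by
  classical
  induction 𝒜 using memberFamily_induction_on with
  | empty => simp [hk]
  | singleton_empty => simp
  | @subfamily a 𝒜 ih₀ ih₁ =>
    have hout (i) (hi : i ∈ s \ {i ∈ s | a ∈ A i}) : a ∉ A i := by simp_all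
    rw [← card_memberSubfamily_add_card_nonMemberSubfamily a]
    have := NNReal.add_pow_le_prod_of_pow_le_prod hk (filter_subset _ s) (hA a)
      (x := #(𝒜.memberSubfamily a)) (y := #(𝒜.nonMemberSubfamily a))
      (f := fun i => (#(traceOn (𝒜.memberSubfamily a) (A i)) : NNReal))
      (g := fun i => (#(traceOn (𝒜.nonMemberSubfamily a) (A i)) : NNReal))
      (h := fun i => (#(traceOn 𝒜 (A i)) : NNReal)) (by exact_mod_cast ih₁) (by exact_mod_cast ih₀)
      (fun i hi => by exact_mod_cast card_le_card (traceOn_memberSubfamily_subset (hout i hi)))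
      (fun i hi => by exact_mod_cast card_le_card traceOn_nonMemberSubfamily_subset)
      (fun i hi => by exact_mod_cast (card_traceOn_memberSubfamily_add (mem_filter.mp hi).2).le)
    exact_mod_cast this

theorem card_pow_le_prod_card_traceOn_pow {k : ℕ} (hk : k ≠ 0) (s : Finset ι)
    (A : ι → Finset α) (m : ι → ℕ) (hA : ∀ x, k ≤ ∑ i ∈ s with x ∈ A i, m i)
    (𝒜 : Finset (Finset α)) :
    #𝒜 ^ k ≤ ∏ i ∈ s, #(traceOn 𝒜 (A i)) ^ m i := by
  have := card_pow_le_prod_card_traceOn hk (s.sigma fun i => range (m i)) (fun p => A p.1)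
    (fun x => by simpa [filter_sigma, card_sigma, sum_filter, apply_ite card] using hA x) 𝒜
  simpa [prod_sigma] using this

theorem card_traceOn_le (𝒜 : Finset (Finset α)) (A : Finset α) : #(traceOn 𝒜 A) ≤ 2 ^ #A := by
  rw [← card_powerset]
  exact card_le_card fun T hT => by
    obtain ⟨S, -, rfl⟩ := mem_image.mp hT
    exact mem_powerset.mpr inter_subset_right

end Finset

namespace SimpleGraph

variable {V : Type*} {G : SimpleGraph V}

theorem deg_eq_degree (v : V) [Fintype (G.neighborSet v)] : deg G v = G.degree v := by
  rw [deg, ← card_neighborSet_eq_degree, ← Nat.card_eq_fintype_card, Nat.card_coe_set_eq]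
  rfl

theorem exists_adj_of_connected_induce {S : Finset V} (hS : 2 ≤ #S)
    (hconn : (G.induce (S : Set V)).Connected) {v : V} (hv : v ∈ S) : ∃ u ∈ S, G.Adj v u := by
  have : Nontrivial (S : Set V) := Set.nontrivial_coe_sort.mpr (by
    simpa using (one_lt_card_iff_nontrivial.mp hS))
  obtain ⟨u, hu⟩ := hconn.preconnected.exists_adj_of_nontrivial ⟨v, hv⟩
  exact ⟨u, u.2, hu⟩

variable [G.LocallyFinite]

variable (G) in
def closedNbhdCoverMult (Δ : ℕ) : V ⊕ V → ℕ :=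
  Sum.elim (fun _ => 1) (fun v => Δ - G.degree v)

@[simp] theorem closedNbhdCoverMult_inl (Δ : ℕ) (v : V) : G.closedNbhdCoverMult Δ (.inl v) = 1 :=
  rfl

@[simp] theorem closedNbhdCoverMult_inr (Δ : ℕ) (v : V) :
    G.closedNbhdCoverMult Δ (.inr v) = Δ - G.degree v := rfl

variable [DecidableEq V]

theorem card_traceOn_closedNbhd_le {𝒜 : Finset (Finset V)}
    (h𝒜 : ∀ S ∈ 𝒜, 2 ≤ #S ∧ (G.induce (S : Set V)).Connected) (v : V) :
    #(traceOn 𝒜 (insert v (G.neighborFinset v))) ≤ 2 ^ (G.degree v + 1) - 1 := by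
  have hcard : #(insert v (G.neighborFinset v)) = G.degree v + 1 := by
    rw [card_insert_of_notMem (notMem_neighborFinset_self G v), card_neighborFinset_eq_degree]
  have hsub : traceOn 𝒜 (insert v (G.neighborFinset v))
      ⊆ (insert v (G.neighborFinset v)).powerset.erase {v} := by
    intro T hT
    obtain ⟨S, hS, rfl⟩ := mem_image.mp hT
    refine mem_erase.mpr ⟨fun heq => ?_, mem_powerset.mpr inter_subset_right⟩
    have hvS : v ∈ S := mem_of_mem_inter_left (heq ▸ mem_singleton_self v)
    obtain ⟨u, huS, hvu⟩ := exists_adj_of_connected_induce (h𝒜 S hS).1 (h𝒜 S hS).2 hvS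
    have : u ∈ S ∩ insert v (G.neighborFinset v) := by simp [huS, hvu]
    rw [heq, mem_singleton] at this
    exact G.loopless.irrefl v (this ▸ hvu)
  calc _ ≤ #((insert v (G.neighborFinset v)).powerset.erase {v}) := card_le_card hsub
    _ = _ := by rw [card_erase_of_mem (by simp), card_powerset, hcard]

variable (G) in
def closedNbhdCover : V ⊕ V → Finset V :=
  Sum.elim (fun v => insert v (G.neighborFinset v)) singleton

@[simp] theorem closedNbhdCover_inl (v : V) :
    G.closedNbhdCover (.inl v) = insert v (G.neighborFinset v) := rfl

@[simp] theorem closedNbhdCover_inr (v : V) : G.closedNbhdCover (.inr v) = {v} := rfl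

variable (G) [Fintype V]

theorem le_sum_closedNbhdCoverMult (Δ : ℕ) (x : V) :
    Δ + 1 ≤ ∑ i with x ∈ G.closedNbhdCover i, G.closedNbhdCoverMult Δ i := by
  have hcover : ({i | x ∈ G.closedNbhdCover i} : Finset (V ⊕ V))
      = (insert x (G.neighborFinset x)).disjSum {x} := by
    ext (v | v) <;> simp [eq_comm, adj_comm]
  rw [hcover, sum_disjSum]
  simp [card_insert_of_notMem]
  omega

theorem prod_card_traceOn_closedNbhdCover_le {𝒜 : Finset (Finset V)}
    (h𝒜 : ∀ S ∈ 𝒜, 2 ≤ #S ∧ (G.induce (S : Set V)).Connected) {Δ : ℕ}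
    (hΔ : ∀ v, G.degree v ≤ Δ) :
    ∏ i, #(traceOn 𝒜 (G.closedNbhdCover i)) ^ G.closedNbhdCoverMult Δ i
      ≤ (2 ^ (Δ + 1) - 1) ^ Fintype.card V := by
  rw [Fintype.prod_sum_type, ← prod_mul_distrib, ← card_univ, ← prod_const]
  refine prod_le_prod' fun v _ => ?_
  have hv : (2 ^ (G.degree v + 1) - 1) * 2 ^ (Δ - G.degree v) ≤ 2 ^ (Δ + 1) - 1 := by
    rw [Nat.sub_mul, one_mul, ← pow_add, show G.degree v + 1 + (Δ - G.degree v) = Δ + 1 by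
      have := hΔ v; omega]
    exact Nat.sub_le_sub_left Nat.one_le_two_pow _
  refine le_trans ?_ hv
  simp only [closedNbhdCover_inl, closedNbhdCover_inr, closedNbhdCoverMult_inl,
    closedNbhdCoverMult_inr, pow_one]
  gcongr
  · exact card_traceOn_closedNbhd_le h𝒜 v
  · exact (card_traceOn_le _ _).trans_eq (by simp)

end SimpleGraph

theorem Real.le_rpow_inv_pow_of_pow_le {x B : ℝ} {k n : ℕ} (hx : 0 ≤ x) (hB : 0 ≤ B)
    (hk : k ≠ 0) (h : x ^ k ≤ B ^ n) : x ≤ (B ^ (k : ℝ)⁻¹) ^ n := by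
  rwa [← pow_le_pow_iff_left₀ hx (by positivity) hk, ← pow_mul, mul_comm, pow_mul,
    Real.rpow_inv_natCast_pow hB hk]

theorem stmt11 {V : Type*} [Fintype V] (G : SimpleGraph V) (Δ : ℕ)
    (hdeg : ∀ v, deg G v ≤ Δ) :
    ({S : Finset V | 2 ≤ S.card ∧ (G.induce (S : Set V)).Connected}.ncard : ℝ)
      ≤ (((2 : ℝ) ^ (Δ + 1) - 1) ^ ((1 : ℝ) / ((Δ : ℝ) + 1))) ^ (Fintype.card V) := by
  classical
  set F : Finset (Finset V) := {S | 2 ≤ #S ∧ (G.induce (S : Set V)).Connected}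
  have hF : {S : Finset V | 2 ≤ #S ∧ (G.induce (S : Set V)).Connected}.ncard = #F := by
    rw [← Set.ncard_coe_finset]
    simp [F]
  have hΔ (v : V) : G.degree v ≤ Δ := deg_eq_degree (G := G) v ▸ hdeg v
  have hcount : #F ^ (Δ + 1) ≤ (2 ^ (Δ + 1) - 1) ^ Fintype.card V :=
    (card_pow_le_prod_card_traceOn_pow Δ.succ_ne_zero univ _ _
      (G.le_sum_closedNbhdCoverMult Δ) F).trans
      (G.prod_card_traceOn_closedNbhdCover_le (fun S hS => (mem_filter.mp hS).2) hΔ)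
  have hexp : (1 : ℝ) / ((Δ : ℝ) + 1) = ((Δ + 1 : ℕ) : ℝ)⁻¹ := by push_cast; rw [one_div]
  rw [hF, hexp]
  refine Real.le_rpow_inv_pow_of_pow_le (Nat.cast_nonneg _)
    (sub_nonneg.mpr (one_le_pow₀ one_le_two)) Δ.succ_ne_zero ?_
  have hreal := Nat.cast_le (α := ℝ) |>.mpr hcount
  push_cast [Nat.cast_sub Nat.one_le_two_pow] at hreal
  exact hreal
end

section
/- ConsDeg2 soundness: Let G be a connected graph with consecutive degree-2 vertices: edges {v,w} and {w,z} with d_G(w) = d_G(z) = 2 and v ≠ z. Let G' be obtained by deleting w together with its edges and adding edge {v,z} (suppressing w). Then the maximum number of internal vertices over spanning trees of G equals one plus the maximum number of internal vertices over spanning trees of G'. -/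
open SimpleGraph

/-!
A spanning tree `T` of `G` either contains both edges `vw`, `wz`, and is then the subdivision by `w`
of a spanning tree of `G'` through `vz` with the same degrees elsewhere, so it has exactly one more
internal vertex (namely `w`); or `w` is a leaf of `T`, and deleting it costs at most the internal
vertex at its neighbour. Conversely, a spanning tree of `G'` either uses `vz`, which we subdivide,
or it does not, and then `z` is a leaf of it (its only other neighbour in `G` is `w`), so attaching
`w` at `z` makes `z` internal. Being a tree is transferred along both operations through
connectivity and the edge count `|E| + 1 = |V|`, the latter read off the degrees by the handshake
lemma.
-/

open Function

lemma Nat.sSup_eq_sSup_add_one {A B : Set ℕ} (hA : BddAbove A) (hB : BddAbove B)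
    (hne : A.Nonempty) (hBA : ∀ b ∈ B, b + 1 ∈ A) (hAB : ∀ a ∈ A, ∃ b ∈ B, a ≤ b + 1) :
    sSup A = sSup B + 1 := by
  obtain ⟨b, hb, hle⟩ := hAB _ (Nat.sSup_mem hne hA)
  exact le_antisymm (hle.trans (Nat.add_le_add_right (le_csSup hB hb) 1))
    (le_csSup hA (hBA _ (Nat.sSup_mem ⟨b, hb⟩ hB)))


section Counting

variable {V : Type*} [Finite V]

open Classical in
lemma ncard_setOf_eq_ncard_subtype_ne_add (P : V → Prop) (w : V) :
    {x | P x}.ncard = {y : {x // x ≠ w} | P y}.ncard + if P w then 1 else 0 := by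
  have := Fintype.ofFinite V
  simp only [Set.ncard_eq_toFinset_card', Set.toFinset_ofPred, Finset.card_filter]
  rw [Fintype.sum_eq_add_sum_subtype_ne _ w, add_comm]

lemma card_eq_card_subtype_ne_add_one (w : V) : Nat.card V = Nat.card {x // x ≠ w} + 1 := by
  simpa using ncard_setOf_eq_ncard_subtype_ne_add (fun _ => True) w

open Classical in
lemma deg_eq_ncard_subtype_ne_add (T : SimpleGraph V) (x w : V) :
    deg T x = {u : {y // y ≠ w} | T.Adj x u}.ncard + if T.Adj x w then 1 else 0 :=
  ncard_setOf_eq_ncard_subtype_ne_add _ w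

lemma internalCount_eq_ncard_subtype_ne_add (T : SimpleGraph V) (w : V) :
    internalCount T =
      {y : {x // x ≠ w} | 2 ≤ deg T y}.ncard + if 2 ≤ deg T w then 1 else 0 := by
  unfold internalCount
  convert ncard_setOf_eq_ncard_subtype_ne_add (2 ≤ deg T ·) w

lemma bddAbove_setOf_internalCount (P : SimpleGraph V → Prop) :
    BddAbove {n | ∃ T, P T ∧ internalCount T = n} :=
  ⟨Nat.card V, by rintro _ ⟨T, -, rfl⟩; exact Set.ncard_le_card _⟩

end Counting

lemma sum_deg_eq_two_mul_card_edgeSet {V : Type*} [Fintype V] (T : SimpleGraph V) :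
    ∑ x, deg T x = 2 * Nat.card T.edgeSet := by
  classical
  have hdeg : ∀ x, deg T x = T.degree x := fun x => by
    rw [deg, Set.ncard_eq_toFinset_card', ← card_neighborSet_eq_degree, Set.toFinset_card]
    rfl
  simp only [hdeg, sum_degrees_eq_twice_card_edges, edgeFinset_card, Nat.card_eq_fintype_card]

section Connectivity

variable {V W : Type*}

lemma SimpleGraph.Connected.of_adj_reachable {G : SimpleGraph V} {H : SimpleGraph W}
    (hG : G.Connected) (f : V → W) (hadj : ∀ a b, G.Adj a b → H.Reachable (f a) (f b))
    (hf : ∀ b, ∃ a, H.Reachable (f a) b) : H.Connected := by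
  have hreach : ∀ a a', H.Reachable (f a) (f a') := fun a a' => by
    simp only [reachable_iff_reflTransGen] at hadj ⊢
    exact (reachable_iff_reflTransGen _ _ |>.1 (hG.preconnected a a')).lift' f hadj
  have : Nonempty V := hG.nonempty
  rw [connected_iff]
  refine ⟨fun b b' => ?_, ⟨f (Classical.arbitrary V)⟩⟩
  obtain ⟨a, ha⟩ := hf b
  obtain ⟨a', ha'⟩ := hf b'
  exact (ha.symm.trans (hreach a a')).trans ha'

variable {w : V} {T : SimpleGraph V} {T' : SimpleGraph {x // x ≠ w}}

lemma connected_of_connected_subtype_ne (h' : T'.Connected)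
    (hadj : ∀ a b, T'.Adj a b → T.Reachable a b) (hw : ∃ a : {x // x ≠ w}, T.Adj w a) :
    T.Connected := by
  refine h'.of_adj_reachable Subtype.val hadj fun b => ?_
  by_cases hb : b = w
  · obtain ⟨a, ha⟩ := hw
    exact ⟨a, hb ▸ ha.symm.reachable⟩
  · exact ⟨⟨b, hb⟩, .rfl⟩

lemma connected_subtype_ne_of_connected (h : T.Connected) (c : {x // x ≠ w})
    (hadj : ∀ a b : {x // x ≠ w}, T.Adj a b → T'.Reachable a b)
    (hw : ∀ a : {x // x ≠ w}, T.Adj w a → T'.Reachable c a) : T'.Connected := by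
  classical
  let retract (x : V) : {x // x ≠ w} := if hx : x = w then c else ⟨x, hx⟩
  have retract_val (a : {x // x ≠ w}) : retract a = a := dif_neg a.2
  refine h.of_adj_reachable retract (fun a b hab => ?_) fun b => ⟨b, by rw [retract_val]⟩
  rcases eq_or_ne a w with rfl | ha
  · simpa [retract, hab.ne'] using hw ⟨b, hab.ne'⟩ hab
  rcases eq_or_ne b w with rfl | hb
  · simpa [retract, hab.ne] using (hw ⟨a, hab.ne⟩ hab.symm).symm
  simpa [retract, ha, hb] using hadj ⟨a, ha⟩ ⟨b, hb⟩ hab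

lemma isTree_iff_of_card_edgeSet [Finite V] (hconn : T.Connected ↔ T'.Connected)
    (hcard : Nat.card T.edgeSet = Nat.card T'.edgeSet + 1) : T.IsTree ↔ T'.IsTree := by
  rw [isTree_iff_connected_and_card, isTree_iff_connected_and_card, hconn, hcard,
    card_eq_card_subtype_ne_add_one w, Nat.add_right_cancel_iff]

end Connectivity

section Extensions

variable {V : Type*} {w : V}

/- Two ways in which a graph `T` on `V` arises from a graph `T'` on `V ∖ {w}`: by attaching `w` as
a leaf at `c`, or by subdividing the edge `vz` of `T'` with `w`. -/
structure IsLeafExtension (T : SimpleGraph V) (T' : SimpleGraph {x // x ≠ w})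
    (c : {x // x ≠ w}) : Prop where
  adj_iff : ∀ a b : {x // x ≠ w}, T.Adj a b ↔ T'.Adj a b
  adj_center_iff : ∀ x, T.Adj w x ↔ x = c

structure IsSubdivision (T : SimpleGraph V) (T' : SimpleGraph {x // x ≠ w})
    (v z : {x // x ≠ w}) : Prop where
  adj : T'.Adj v z
  adj_iff : ∀ a b : {x // x ≠ w}, T.Adj a b ↔ T'.Adj a b ∧ s(a, b) ≠ s(v, z)
  adj_center_iff : ∀ x, T.Adj w x ↔ x = v ∨ x = z

namespace IsLeafExtension

variable {T : SimpleGraph V} {T' : SimpleGraph {x // x ≠ w}} {c : {x // x ≠ w}}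

lemma deg_center (h : IsLeafExtension T T' c) : deg T w = 1 := by
  have : {x | T.Adj w x} = {c.1} := Set.ext h.adj_center_iff
  rw [deg, this, Set.ncard_singleton]

open Classical in
lemma deg_eq [Finite V] (h : IsLeafExtension T T' c) (y : {x // x ≠ w}) :
    deg T y = deg T' y + if y = c then 1 else 0 := by
  rw [deg_eq_ncard_subtype_ne_add T y w, T.adj_comm y, h.adj_center_iff, Subtype.coe_inj]
  simp only [h.adj_iff]
  congr 1
  congr

lemma card_edgeSet [Finite V] (h : IsLeafExtension T T' c) :
    Nat.card T.edgeSet = Nat.card T'.edgeSet + 1 := by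
  classical
  have := Fintype.ofFinite V
  have hT := sum_deg_eq_two_mul_card_edgeSet T
  have hT' := sum_deg_eq_two_mul_card_edgeSet T'
  rw [Fintype.sum_eq_add_sum_subtype_ne _ w, h.deg_center] at hT
  simp only [h.deg_eq, Finset.sum_add_distrib, Finset.sum_ite_eq', Finset.mem_univ, if_true] at hT
  omega

lemma connected_iff (h : IsLeafExtension T T' c) : T.Connected ↔ T'.Connected := by
  refine ⟨fun hT => connected_subtype_ne_of_connected hT c
    (fun a b hab => ((h.adj_iff a b).1 hab).reachable) fun a ha => ?_,
    fun hT' => connected_of_connected_subtype_ne hT'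
      (fun a b hab => ((h.adj_iff a b).2 hab).reachable) ⟨c, (h.adj_center_iff c).2 rfl⟩⟩
  rw [Subtype.coe_inj.1 ((h.adj_center_iff a).1 ha)]

lemma isTree_iff [Finite V] (h : IsLeafExtension T T' c) : T.IsTree ↔ T'.IsTree :=
  isTree_iff_of_card_edgeSet h.connected_iff h.card_edgeSet

lemma internalCount_le [Finite V] (h : IsLeafExtension T T' c) :
    internalCount T ≤ internalCount T' + 1 := by
  rw [internalCount_eq_ncard_subtype_ne_add T w, h.deg_center, if_neg (by omega), add_zero]
  calc {y : {x // x ≠ w} | 2 ≤ deg T y}.ncard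
      ≤ (insert c {y | 2 ≤ deg T' y}).ncard := by
        refine Set.ncard_le_ncard (fun y hy => ?_)
        by_cases hyc : y = c
        · exact Or.inl hyc
        · exact Or.inr (by simpa [h.deg_eq, hyc] using hy)
    _ ≤ internalCount T' + 1 := Set.ncard_insert_le _ _

lemma internalCount_eq [Finite V] (h : IsLeafExtension T T' c) (hc : deg T' c = 1) :
    internalCount T = internalCount T' + 1 := by
  rw [internalCount_eq_ncard_subtype_ne_add T w, h.deg_center, if_neg (by omega), add_zero]
  have : {y : {x // x ≠ w} | 2 ≤ deg T y} = insert c {y | 2 ≤ deg T' y} := by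
    ext y
    by_cases hyc : y = c
    · simp [h.deg_eq, hyc, hc]
    · simp [h.deg_eq, hyc]
  rw [this, Set.ncard_insert_of_notMem (by simp [hc])]
  rfl

end IsLeafExtension

lemma exists_isLeafExtension (T' : SimpleGraph {x // x ≠ w}) (c : {x // x ≠ w}) :
    ∃ T : SimpleGraph V, IsLeafExtension T T' c :=
  ⟨T'.map (Embedding.subtype _) ⊔ edge w c,
    ⟨fun a b => by simp only [sup_adj, map_adj, edge_adj]; simp [a.2, b.2], fun x => by
      simp only [sup_adj, map_adj, edge_adj]
      have := c.2
      aesop⟩⟩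

lemma isLeafExtension_comap {T : SimpleGraph V} {c : {x // x ≠ w}}
    (h : ∀ x, T.Adj w x ↔ x = c) : IsLeafExtension T (T.comap Subtype.val) c :=
  ⟨fun _ _ => Iff.rfl, h⟩

namespace IsSubdivision

variable {T : SimpleGraph V} {T' : SimpleGraph {x // x ≠ w}} {v z : {x // x ≠ w}}

lemma symm (h : IsSubdivision T T' v z) : IsSubdivision T T' z v :=
  ⟨h.adj.symm, fun a b => by rw [h.adj_iff, Sym2.eq_swap (a := v)],
    fun x => by rw [h.adj_center_iff, or_comm]⟩

lemma deg_center (h : IsSubdivision T T' v z) : deg T w = 2 := by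
  have : {x | T.Adj w x} = {v.1, z.1} := Set.ext h.adj_center_iff
  rw [deg, this, Set.ncard_pair (Subtype.coe_injective.ne h.adj.ne)]

lemma deg_left [Finite V] (h : IsSubdivision T T' v z) : deg T v = deg T' v := by
  have hN : {u : {x // x ≠ w} | T.Adj v u} = {u | T'.Adj v u} \ {z} := by
    ext u
    simp [h.adj_iff, h.adj.ne]
  have hvw : T.Adj v w := ((h.adj_center_iff v).2 (Or.inl rfl)).symm
  rw [deg_eq_ncard_subtype_ne_add T v w, if_pos hvw, hN,
    Set.ncard_sdiff_singleton_add_one (s := {u | T'.Adj v u}) h.adj]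
  rfl

lemma deg_eq [Finite V] (h : IsSubdivision T T' v z) (y : {x // x ≠ w}) :
    deg T y = deg T' y := by
  obtain rfl | hyv := eq_or_ne y v
  · exact h.deg_left
  obtain rfl | hyz := eq_or_ne y z
  · exact h.symm.deg_left
  have hyw : ¬T.Adj y w := by
    rw [T.adj_comm, h.adj_center_iff]
    simp [← Subtype.ext_iff, hyv, hyz]
  rw [deg_eq_ncard_subtype_ne_add T y w, if_neg hyw, add_zero]
  congr 1
  ext u
  simp [h.adj_iff, hyv, hyz]

lemma card_edgeSet [Finite V] (h : IsSubdivision T T' v z) :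
    Nat.card T.edgeSet = Nat.card T'.edgeSet + 1 := by
  classical
  have := Fintype.ofFinite V
  have hT := sum_deg_eq_two_mul_card_edgeSet T
  have hT' := sum_deg_eq_two_mul_card_edgeSet T'
  rw [Fintype.sum_eq_add_sum_subtype_ne _ w, h.deg_center] at hT
  simp only [h.deg_eq] at hT
  omega

lemma connected_iff (h : IsSubdivision T T' v z) : T.Connected ↔ T'.Connected := by
  have hw (a : {x // x ≠ w}) (ha : a = v ∨ a = z) : T.Adj w a :=
    (h.adj_center_iff a).2 (by simpa [Subtype.coe_inj] using ha)
  refine ⟨fun hT => connected_subtype_ne_of_connected hT v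
    (fun a b hab => ((h.adj_iff a b).1 hab).1.reachable) fun a ha => ?_,
    fun hT' => connected_of_connected_subtype_ne hT' (fun a b hab => ?_)
      ⟨v, hw v (Or.inl rfl)⟩⟩
  · rcases (h.adj_center_iff a).1 ha with ha | ha <;> rw [Subtype.coe_inj.1 ha]
    exact h.adj.reachable
  · by_cases he : s(a, b) = s(v, z)
    · have hab : (a = v ∨ a = z) ∧ (b = v ∨ b = z) := by
        rw [Sym2.eq_iff] at he
        tauto
      exact (hw a hab.1).symm.reachable.trans (hw b hab.2).reachable
    · exact ((h.adj_iff a b).2 ⟨hab, he⟩).reachable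

lemma isTree_iff [Finite V] (h : IsSubdivision T T' v z) : T.IsTree ↔ T'.IsTree :=
  isTree_iff_of_card_edgeSet h.connected_iff h.card_edgeSet

lemma internalCount_eq [Finite V] (h : IsSubdivision T T' v z) :
    internalCount T = internalCount T' + 1 := by
  rw [internalCount_eq_ncard_subtype_ne_add T w, h.deg_center, if_pos le_rfl]
  simp only [h.deg_eq]
  rfl

end IsSubdivision

lemma exists_isSubdivision {T' : SimpleGraph {x // x ≠ w}} {v z : {x // x ≠ w}}
    (hvz : T'.Adj v z) : ∃ T : SimpleGraph V, IsSubdivision T T' v z :=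
  ⟨(T'.deleteEdges {s(v, z)}).map (Embedding.subtype _) ⊔ edge w v ⊔ edge w z,
    ⟨hvz, fun a b => by simp only [sup_adj, map_adj, edge_adj]; simp [a.2, b.2], fun x => by
      simp only [sup_adj, map_adj, edge_adj]
      have := v.2
      have := z.2
      aesop⟩⟩

lemma isSubdivision_comap_sup_edge {T : SimpleGraph V} {v z : {x // x ≠ w}} (hvz : v ≠ z)
    (hT : ¬T.Adj v z) (h : ∀ x, T.Adj w x ↔ x = v ∨ x = z) :
    IsSubdivision T (T.comap Subtype.val ⊔ edge v z) v z := by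
  refine ⟨by simp [edge_adj, hvz], fun a b => ?_, h⟩
  simp only [sup_adj, comap_adj, edge_adj, ne_eq, Sym2.eq_iff]
  refine ⟨fun hab => ⟨Or.inl hab, ?_⟩, by tauto⟩
  rintro (⟨rfl, rfl⟩ | ⟨rfl, rfl⟩)
  · exact hT hab
  · exact hT hab.symm

/-- The graph `G'` of the statement. -/
def suppress (G : SimpleGraph V) (v w z : V) : SimpleGraph {x // x ≠ w} :=
  fromRel fun a b => G.Adj a.1 b.1 ∨ (a.1 = v ∧ b.1 = z)

section Suppress

variable {G : SimpleGraph V}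

lemma suppress_adj_of_adj {v z : V} {a b : {x // x ≠ w}} (h : G.Adj a b) :
    (suppress G v w z).Adj a b :=
  (fromRel_adj _ a b).2 ⟨fun hab => h.ne (congrArg Subtype.val hab), Or.inl (Or.inl h)⟩

lemma suppress_adj {v z : {x // x ≠ w}} (hvz : v ≠ z) {a b : {x // x ≠ w}} :
    (suppress G v w z).Adj a b ↔ G.Adj a b ∨ s(a, b) = s(v, z) := by
  simp only [suppress, fromRel_adj, Sym2.eq_iff, ← Subtype.ext_iff]
  constructor
  · rintro ⟨-, (h | h) | (h | h)⟩
    · exact Or.inl h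
    · exact Or.inr (Or.inl h)
    · exact Or.inl h.symm
    · exact Or.inr (Or.inr h.symm)
  · rintro (h | ⟨rfl, rfl⟩ | ⟨rfl, rfl⟩)
    · exact ⟨fun hab => h.ne (congrArg Subtype.val hab), Or.inl (Or.inl h)⟩
    · exact ⟨hvz, Or.inl (Or.inr ⟨rfl, rfl⟩)⟩
    · exact ⟨hvz.symm, Or.inr (Or.inr ⟨rfl, rfl⟩)⟩

lemma le_of_forall_adj_subtype_ne {T : SimpleGraph V} (w : V) (hw : ∀ x, T.Adj w x → G.Adj w x)
    (h : ∀ a b : {x // x ≠ w}, T.Adj a b → G.Adj a b) : T ≤ G := by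
  intro a b hab
  by_cases ha : a = w
  · exact ha ▸ hw b (ha ▸ hab)
  by_cases hb : b = w
  · exact (hb ▸ hw a (hb ▸ hab.symm)).symm
  exact h ⟨a, ha⟩ ⟨b, hb⟩ hab

variable {T : SimpleGraph V} {T' : SimpleGraph {x // x ≠ w}} {c v z : {x // x ≠ w}}

lemma IsLeafExtension.le_suppress (h : IsLeafExtension T T' c) (hT : T ≤ G) :
    T' ≤ suppress G v w z :=
  fun a b hab => suppress_adj_of_adj (hT ((h.adj_iff a b).2 hab))

lemma IsLeafExtension.le_of_le_suppress (h : IsLeafExtension T T' c)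
    (hT' : T' ≤ suppress G v w z) (hvz : v ≠ z) (hnadj : ¬T'.Adj v z) (hc : G.Adj w c) :
    T ≤ G :=
  le_of_forall_adj_subtype_ne w (fun x hx => (h.adj_center_iff x).1 hx ▸ hc) fun a b hab => by
    have hab' := (h.adj_iff a b).1 hab
    exact ((suppress_adj hvz).1 (hT' hab')).resolve_right
      fun he => hnadj ((T'.adj_congr_of_sym2 he).1 hab')

lemma IsSubdivision.le_suppress (h : IsSubdivision T T' v z) (hT : T ≤ G) :
    T' ≤ suppress G v w z := fun a b hab => by
  by_cases he : s(a, b) = s(v, z)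
  · exact (suppress_adj h.adj.ne).2 (Or.inr he)
  · exact suppress_adj_of_adj (hT ((h.adj_iff a b).2 ⟨hab, he⟩))

lemma IsSubdivision.le_of_le_suppress (h : IsSubdivision T T' v z)
    (hT' : T' ≤ suppress G v w z) (hv : G.Adj w v) (hz : G.Adj w z) : T ≤ G :=
  le_of_forall_adj_subtype_ne w
    (fun x hx => by rcases (h.adj_center_iff x).1 hx with rfl | rfl <;> assumption)
    fun a b hab => by
      obtain ⟨hab', he⟩ := (h.adj_iff a b).1 hab
      exact ((suppress_adj h.adj.ne).1 (hT' hab')).resolve_right he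

variable [Finite V]

lemma adj_iff_of_deg_eq_two {v z : V} (hw : deg G w = 2) (hv : G.Adj w v) (hz : G.Adj w z)
    (hvz : v ≠ z) (x : V) : G.Adj w x ↔ x = v ∨ x = z := by
  have : {x | G.Adj w x} = {v, z} := by
    refine (Set.eq_of_subset_of_ncard_le ?_ ?_ (Set.toFinite _)).symm
    · rintro x (rfl | rfl) <;> assumption
    · rw [Set.ncard_pair hvz]
      exact hw.le
  exact Set.ext_iff.1 this x

lemma deg_eq_one_of_not_adj (hvz : v ≠ z) (hz : deg G z = 2) (hwz : G.Adj w z)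
    (hT' : IsSpanningTree (suppress G v w z) T') (hnadj : ¬T'.Adj v z) : deg T' z = 1 := by
  have hGz : {u : {x // x ≠ w} | G.Adj z u}.ncard = 1 := by
    have := deg_eq_ncard_subtype_ne_add G z w
    rw [if_pos hwz.symm] at this
    omega
  have hsub : {u | T'.Adj z u} ⊆ {u : {x // x ≠ w} | G.Adj z u} := fun u hu =>
    ((suppress_adj hvz).1 (hT'.1 hu)).resolve_right
      fun he => hnadj ((T'.adj_congr_of_sym2 he).1 hu)
  have : Nontrivial {x // x ≠ w} := ⟨v, z, hvz⟩
  obtain ⟨u, hu⟩ := exists_adj_iff_not_isIsolated.2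
    (hT'.2.connected.preconnected.not_isIsolated z)
  have hpos : 0 < deg T' z := (Set.ncard_pos (Set.toFinite _)).2 ⟨u, hu⟩
  have hle : deg T' z ≤ 1 := hGz ▸ Set.ncard_le_ncard hsub
  omega

lemma exists_isSpanningTree_internalCount_eq_add_one (hz : deg G z = 2) (hvw : G.Adj v w)
    (hwz : G.Adj w z) (hvz : v ≠ z) (hT' : IsSpanningTree (suppress G v w z) T') :
    ∃ T, IsSpanningTree G T ∧ internalCount T = internalCount T' + 1 := by
  by_cases hadj : T'.Adj v z
  · obtain ⟨T, hT⟩ := exists_isSubdivision (V := V) hadj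
    exact ⟨T, ⟨hT.le_of_le_suppress hT'.1 hvw.symm hwz, hT.isTree_iff.2 hT'.2⟩,
      hT.internalCount_eq⟩
  · obtain ⟨T, hT⟩ := exists_isLeafExtension T' z
    exact ⟨T, ⟨hT.le_of_le_suppress hT'.1 hvz hadj hwz, hT.isTree_iff.2 hT'.2⟩,
      hT.internalCount_eq (deg_eq_one_of_not_adj hvz hz hwz hT' hadj)⟩

lemma exists_isSpanningTree_suppress_internalCount_le (hw : deg G w = 2) (hvw : G.Adj v w)
    (hwz : G.Adj w z) (hvz : v ≠ z) (hnadj : ¬G.Adj v z) (hT : IsSpanningTree G T) :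
    ∃ T', IsSpanningTree (suppress G v w z) T' ∧ internalCount T ≤ internalCount T' + 1 := by
  have hTw (x : V) (hx : T.Adj w x) : x = v ∨ x = z :=
    (adj_iff_of_deg_eq_two hw hvw.symm hwz (Subtype.coe_injective.ne hvz) x).1 (hT.1 hx)
  have of_leaf (c : {x // x ≠ w}) (hc : ∀ x, T.Adj w x ↔ x = c) :
      ∃ T', IsSpanningTree (suppress G v w z) T' ∧ internalCount T ≤ internalCount T' + 1 :=
    have h := isLeafExtension_comap hc
    ⟨_, ⟨h.le_suppress hT.1, h.isTree_iff.1 hT.2⟩, h.internalCount_le⟩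
  by_cases hv : T.Adj w v <;> by_cases hz : T.Adj w z
  · have h := isSubdivision_comap_sup_edge hvz (fun hvz => hnadj (hT.1 hvz))
      fun x => ⟨hTw x, by rintro (rfl | rfl) <;> assumption⟩
    exact ⟨_, ⟨h.le_suppress hT.1, h.isTree_iff.1 hT.2⟩, h.internalCount_eq.le⟩
  · exact of_leaf v fun x =>
      ⟨fun hx => (hTw x hx).resolve_right (by rintro rfl; exact hz hx), by rintro rfl; exact hv⟩
  · exact of_leaf z fun x =>
      ⟨fun hx => (hTw x hx).resolve_left (by rintro rfl; exact hv hx), by rintro rfl; exact hz⟩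
  · have : Nontrivial V := ⟨v, w, hvw.ne⟩
    obtain ⟨x, hx⟩ := exists_adj_iff_not_isIsolated.2
      (hT.2.connected.preconnected.not_isIsolated w)
    rcases hTw x hx with rfl | rfl
    exacts [(hv hx).elim, (hz hx).elim]

end Suppress

end Extensions

theorem stmt14_general {V : Type*} [Fintype V] (G : SimpleGraph V)
    (hG : G.Connected) (v w z : V)
    (hw : deg G w = 2) (hz : deg G z = 2) (hvw : G.Adj v w) (hwz : G.Adj w z)
    (hvz : v ≠ z) (hnadj : ¬ G.Adj v z) :
    sSup {n : ℕ | ∃ T : SimpleGraph V, IsSpanningTree G T ∧ internalCount T = n} =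
      1 + sSup {n : ℕ | ∃ T' : SimpleGraph {x : V // x ≠ w},
        IsSpanningTree (SimpleGraph.fromRel
          (fun a b : {x : V // x ≠ w} => G.Adj a.1 b.1 ∨ (a.1 = v ∧ b.1 = z))) T' ∧
        internalCount T' = n} := by
  let v' : {x // x ≠ w} := ⟨v, hvw.ne⟩
  let z' : {x // x ≠ w} := ⟨z, hwz.ne'⟩
  have hvz' : v' ≠ z' := ne_of_apply_ne Subtype.val hvz
  obtain ⟨T, hTG, hT⟩ := hG.exists_isTree_le
  rw [add_comm]
  refine Nat.sSup_eq_sSup_add_one (bddAbove_setOf_internalCount _)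
    (bddAbove_setOf_internalCount _) ⟨_, T, ⟨hTG, hT⟩, rfl⟩ ?_ ?_
  · rintro _ ⟨T', hT', rfl⟩
    exact exists_isSpanningTree_internalCount_eq_add_one (v := v') (z := z') hz hvw hwz hvz' hT'
  · rintro _ ⟨T, hT, rfl⟩
    obtain ⟨T', hT', hle⟩ := exists_isSpanningTree_suppress_internalCount_le
      (v := v') (z := z') hw hvw hwz hvz' hnadj hT
    exact ⟨_, ⟨T', hT', rfl⟩, hle⟩

theorem stmt14 {V : Type*} [Fintype V] [DecidableEq V] (G : SimpleGraph V)
    (hG : G.Connected) (h4 : 4 ≤ Fintype.card V) (v w z : V)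
    (hw : deg G w = 2) (hz : deg G z = 2) (hvw : G.Adj v w) (hwz : G.Adj w z)
    (hvz : v ≠ z) (hnadj : ¬ G.Adj v z) :
    sSup {n : ℕ | ∃ T : SimpleGraph V, IsSpanningTree G T ∧ internalCount T = n} =
      1 + sSup {n : ℕ | ∃ T' : SimpleGraph {x : V // x ≠ w},
        IsSpanningTree (SimpleGraph.fromRel
          (fun a b : {x : V // x ≠ w} => G.Adj a.1 b.1 ∨ (a.1 = v ∧ b.1 = z))) T' ∧
        internalCount T' = n} :=
  stmt14_general G hG v w z hw hz hvw hwz hvz hnadj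
end
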